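/- Let X be a real symmetric Banach sequence space and γ a continuous linear functional on X. Then γ is symmetric (γ(x∘σ) = γ(x) for all x ∈ X and permutations σ) if and only if γ(x) = γ(x*) for every x in the positive cone X₊ = {x ∈ X : xₙ ≥ 0 for all n}. -/

import Mathlib

open scoped Classical

/-- A Banach sequence space: a subspace of `ℕ → ℝ` with a complete monotone norm
such that the canonical unit vectors have norm one. -/
structure BanachSeqSpace where
  X : Submodule ℝ (ℕ → ℝ)
  N : (ℕ → ℝ) → ℝ
  N_nonneg : ∀ x ∈ X, 0 ≤ N x
  N_eq_zero : ∀ x ∈ X, N x = 0 → x = 0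
  N_add : ∀ x ∈ X, ∀ y ∈ X, N (x + y) ≤ N x + N y
  N_smul : ∀ (c : ℝ), ∀ x ∈ X, N (c • x) = |c| * N x
  complete : ∀ f : ℕ → ℕ → ℝ, (∀ k, f k ∈ X) →
    (∀ ε : ℝ, 0 < ε → ∃ K, ∀ m ≥ K, ∀ n ≥ K, N (f m - f n) < ε) →
    ∃ x ∈ X, ∀ ε : ℝ, 0 < ε → ∃ K, ∀ k ≥ K, N (f k - x) < ε
  mono_mem : ∀ (x : ℕ → ℝ), ∀ y ∈ X, (∀ n, |x n| ≤ |y n|) → x ∈ X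
  mono_norm : ∀ (x : ℕ → ℝ), ∀ y ∈ X, (∀ n, |x n| ≤ |y n|) → N x ≤ N y
  unit_mem : ∀ k : ℕ, (fun n => if n = k then (1 : ℝ) else 0) ∈ X
  unit_norm : ∀ k : ℕ, N (fun n => if n = k then (1 : ℝ) else 0) = 1

/-- A Banach sequence space is symmetric if it is stable under permutations of the
coordinates, with equal norm. -/
def IsSymmetric (S : BanachSeqSpace) : Prop :=
  ∀ x ∈ S.X, ∀ σ : Equiv.Perm ℕ, (x ∘ σ) ∈ S.X ∧ S.N (x ∘ σ) = S.N x

/-- The decreasing rearrangement of a (bounded) sequence, indexed from 0: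
`dstar x n` is the paper's `x*_(n+1) = inf { sup_{k ∉ J} |x k| : |J| ≤ n }`. -/
noncomputable def dstar (x : ℕ → ℝ) (n : ℕ) : ℝ :=
  sInf {a : ℝ | ∃ J : Finset ℕ, J.card ≤ n ∧ a = sSup {b : ℝ | ∃ k, k ∉ J ∧ b = |x k|}}

/-- The closing up of a sequence: its nonzero terms in order, padded with zeros. -/
noncomputable def closingUp (x : ℕ → ℝ) (n : ℕ) : ℝ :=
  if {k | x k ≠ 0}.Infinite ∨ n < {k | x k ≠ 0}.ncard
  then x (Nat.nth (fun k => x k ≠ 0) n) else 0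

/-!
Everything rests on a transfer principle. Suppose `y` arises from `x ∈ X` by moving the nonzero
entries of `x` bijectively to new positions. Such a move need not extend to a permutation, since
the zero sets may differ in size, but after splitting an infinite support into two infinite halves
each half has infinite co-support on both sides, so it does. Hence `y` is a sum of two permuted
pieces of `x`, so `y ∈ X` and every symmetric additive `γ` has `γ y = γ x`.

For `x ≥ 0`, if every level set `{k | t < x k}` (`t > 0`) is finite, `x*` arises from `x` in this
way: `x k` moves to its rank in the decreasing order. Otherwise transfer puts the constant
sequence `1` in `X`. Then `X` is closed under the doubling `w ↦ (n ↦ w ⌊n/2⌋)`, which multiplies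
`γ` by `2` but keeps the norm below `‖w‖∞ ‖1‖`, so boundedness forces `γ = 0`. Conversely, `x*` is
invariant under permutations, so `γ (x ∘ σ) = γ x` on the positive cone, and hence on all of `X`
by writing `x = x⁺ - x⁻`.
-/

open Function Set

variable {ι α β M : Type*}

theorem exists_perm_comp_eq_of_infinite_compl [Countable ι] [Zero M] {x y : ι → M} {φ : ι → ι}
    (hφ : BijOn φ (support x) (support y)) (hxy : EqOn (y ∘ φ) x (support x))
    (hx : (support x)ᶜ.Infinite) (hy : (support y)ᶜ.Infinite) :
    ∃ σ : Equiv.Perm ι, y ∘ σ = x := by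
  have := hx.to_subtype
  have := hy.to_subtype
  obtain ⟨e⟩ : Nonempty (↥(support x)ᶜ ≃ ↥(support y)ᶜ) := by
    rw [← Cardinal.eq, Cardinal.mk_eq_aleph0, Cardinal.mk_eq_aleph0]
  refine ⟨Equiv.subtypeCongr hφ.equiv e, funext fun k => ?_⟩
  by_cases hk : k ∈ support x
  · simpa [Equiv.subtypeCongr, hk, BijOn.equiv] using hxy hk
  · have hek : y (e ⟨k, hk⟩) = 0 := notMem_support.mp (e ⟨k, hk⟩).2
    simp [Equiv.subtypeCongr, hk, hek, notMem_support.mp hk]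

theorem Set.Infinite.exists_union_disjoint_infinite {s : Set ι} (hs : s.Infinite) :
    ∃ B C : Set ι, B ∪ C = s ∧ Disjoint B C ∧ B.Infinite ∧ C.Infinite := by
  obtain ⟨B, C, hBC, hdisj, hcard⟩ := hs.exists_union_disjoint_cardinal_eq_of_infinite
  have hiff : B.Infinite ↔ C.Infinite := by
    rw [← Set.infinite_coe_iff, ← Set.infinite_coe_iff]
    exact (Cardinal.eq.mp hcard).some.infinite_iff
  rcases Set.infinite_union.mp (hBC ▸ hs) with hB | hC
  · exact ⟨B, C, hBC, hdisj, hB, hiff.mp hB⟩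
  · exact ⟨B, C, hBC, hdisj, hiff.mpr hC, hC⟩

theorem compl_indicator_eq_of_support_eq_union [Zero M] {f : ι → M} {B C : Set ι}
    (hf : support f = B ∪ C) (hBC : Disjoint B C) : Bᶜ.indicator f = C.indicator f := by
  rw [← indicator_inter_support, hf, inter_union_distrib_left, compl_inter_self, empty_union,
    inter_eq_right.mpr hBC.subset_compl_left]

theorem exists_perm_indicator_comp_eq [Countable ι] [Zero M] {x y : ι → M} {φ : ι → ι}
    (hφ : BijOn φ (support x) (support y)) (hxy : EqOn (y ∘ φ) x (support x))
    {B C : Set ι} (hB : B ⊆ support x) (hC : C ⊆ support x) (hBC : Disjoint B C)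
    (hCinf : C.Infinite) :
    ∃ σ : Equiv.Perm ι, (φ '' B).indicator y ∘ σ = B.indicator x := by
  have hinj := hφ.injOn
  have himg : φ '' B ⊆ support y := hφ.image_eq ▸ image_mono hB
  apply exists_perm_comp_eq_of_infinite_compl (φ := φ)
  · rw [support_indicator, support_indicator, inter_eq_left.mpr hB, inter_eq_left.mpr himg]
    exact (hinj.mono hB).bijOn_image
  · intro k hk
    rw [support_indicator] at hk
    simpa [indicator_of_mem (mem_image_of_mem φ hk.1), indicator_of_mem hk.1] using hxy hk.2
  · rw [support_indicator, inter_eq_left.mpr hB]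
    exact hCinf.mono hBC.subset_compl_left
  · rw [support_indicator, inter_eq_left.mpr himg]
    refine (hCinf.image (hinj.mono hC)).mono (subset_compl_iff_disjoint_left.mpr ?_)
    rw [disjoint_iff_inter_eq_empty, ← hinj.image_inter hB hC, hBC.inter_eq, image_empty]

theorem exists_eq_indicator_comp_perm_add_compl [Countable ι] [Infinite ι] [AddCommMonoid M]
    {x y : ι → M} {φ : ι → ι} (hφ : BijOn φ (support x) (support y))
    (hxy : EqOn (y ∘ φ) x (support x)) :
    ∃ (A : Set ι) (σ τ : Equiv.Perm ι), y = A.indicator x ∘ σ + Aᶜ.indicator x ∘ τ := by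
  by_cases hfin : (support x).Finite
  · obtain ⟨σ, rfl⟩ := exists_perm_comp_eq_of_infinite_compl hφ hxy hfin.infinite_compl
      (hφ.image_eq ▸ hfin.image φ).infinite_compl
    refine ⟨univ, σ.symm, 1, ?_⟩
    ext k
    simp
  · obtain ⟨B, C, hBC, hdisj, hB, hC⟩ := Set.Infinite.exists_union_disjoint_infinite hfin
    have hBs : B ⊆ support x := hBC ▸ subset_union_left
    have hCs : C ⊆ support x := hBC ▸ subset_union_right
    obtain ⟨σ, hσ⟩ := exists_perm_indicator_comp_eq hφ hxy hBs hCs hdisj hC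
    obtain ⟨τ, hτ⟩ := exists_perm_indicator_comp_eq hφ hxy hCs hBs hdisj.symm hB
    have hy : support y = φ '' B ∪ φ '' C := by rw [← image_union, hBC, hφ.image_eq]
    have himg : Disjoint (φ '' B) (φ '' C) := by
      rw [disjoint_iff_inter_eq_empty, ← hφ.injOn.image_inter hBs hCs, hdisj.inter_eq,
        image_empty]
    refine ⟨B, σ.symm, τ.symm, ?_⟩
    rw [compl_indicator_eq_of_support_eq_union hBC.symm hdisj, ← hσ, ← hτ, comp_assoc, comp_assoc,
      Equiv.self_comp_symm, Equiv.self_comp_symm, comp_id, comp_id,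
      ← compl_indicator_eq_of_support_eq_union hy himg, indicator_self_add_compl]

theorem indicator_range_comp_leftInverse [Zero M] {f : α → β} {g : β → α} (hfg : LeftInverse g f)
    (w : α → M) :
    (range f).indicator (w ∘ g) ∘ f = w := by
  funext k
  simp [hfg k]

theorem bijOn_support_indicator_range [Zero M] {f : α → β} {g : β → α} (hfg : LeftInverse g f)
    (w : α → M) :
    BijOn f (support w) (support ((range f).indicator (w ∘ g))) := by
  have hw := congrFun (indicator_range_comp_leftInverse hfg w)
  refine ⟨fun k hk => by simpa [mem_support, ← hw k] using hk, hfg.injective.injOn, ?_⟩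
  intro n hn
  obtain ⟨k, rfl⟩ : n ∈ range f := by
    by_contra h
    exact hn (indicator_of_notMem h _)
  exact ⟨k, by simpa [mem_support, ← hw k] using hn, rfl⟩

section Rearrangement

variable {x : ℕ → ℝ}

def sortKey (x : ℕ → ℝ) (k : ℕ) : ℝᵒᵈ ×ₗ ℕ := toLex (OrderDual.toDual |x k|, k)

-- The position of `k` when the indices are listed by decreasing `|x k|`, ties broken by index.
noncomputable def decRank (x : ℕ → ℝ) (k : ℕ) : ℕ := {l | sortKey x l < sortKey x k}.ncard

theorem sortKey_injective : Injective (sortKey x) :=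
  fun _ _ h => congrArg (fun p => (ofLex p).2) h

theorem abs_le_of_sortKey_le {k l : ℕ} (h : sortKey x k ≤ sortKey x l) : |x l| ≤ |x k| := by
  rcases Prod.Lex.toLex_le_toLex.mp h with h | ⟨h, -⟩
  · exact h.le
  · exact (congrArg OrderDual.ofDual h).ge

theorem finite_setOf_sortKey_lt (hfin : ∀ t > 0, {k | t < |x k|}.Finite) {k : ℕ} (hk : x k ≠ 0) :
    {l | sortKey x l < sortKey x k}.Finite := by
  refine ((hfin _ (abs_pos.mpr hk)).union (finite_Iio k)).subset fun l hl => ?_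
  rcases Prod.Lex.toLex_lt_toLex.mp hl with h | ⟨-, h⟩
  · exact Or.inl h
  · exact Or.inr h

theorem ne_zero_of_sortKey_le {k l : ℕ} (hk : x k ≠ 0) (h : sortKey x l ≤ sortKey x k) :
    x l ≠ 0 :=
  abs_pos.mp ((abs_pos.mpr hk).trans_le (abs_le_of_sortKey_le h))

theorem decRank_lt_decRank (hfin : ∀ t > 0, {k | t < |x k|}.Finite) {k l : ℕ} (hk : x k ≠ 0)
    (h : sortKey x l < sortKey x k) : decRank x l < decRank x k :=
  ncard_lt_ncard
    ((ssubset_iff_of_subset fun _ hm => lt_trans hm h).mpr ⟨l, h, lt_irrefl (sortKey x l)⟩)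
    (finite_setOf_sortKey_lt hfin hk)

theorem injOn_decRank (hfin : ∀ t > 0, {k | t < |x k|}.Finite) :
    InjOn (decRank x) (support x) := by
  intro k hk l hl h
  by_contra hne
  rcases (sortKey_injective.ne hne).lt_or_gt with h' | h'
  · exact (decRank_lt_decRank hfin hl h').ne h
  · exact (decRank_lt_decRank hfin hk h').ne' h

theorem ncard_setOf_sortKey_le (hfin : ∀ t > 0, {k | t < |x k|}.Finite) {k : ℕ} (hk : x k ≠ 0) :
    {l | sortKey x l ≤ sortKey x k}.ncard = decRank x k + 1 := by
  have : {l | sortKey x l ≤ sortKey x k} = insert k {l | sortKey x l < sortKey x k} := by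
    ext l
    simp [le_iff_lt_or_eq, sortKey_injective.eq_iff, or_comm]
  rw [this, ncard_insert_of_notMem (s := {l | sortKey x l < sortKey x k})
    (lt_irrefl (sortKey x k)) (finite_setOf_sortKey_lt hfin hk), decRank]

theorem exists_decRank_eq (hfin : ∀ t > 0, {k | t < |x k|}.Finite) {k j : ℕ} (hk : x k ≠ 0)
    (hj : j < decRank x k) : ∃ l ∈ support x, decRank x l = j := by
  set T := {l | sortKey x l ≤ sortKey x k}
  have hT : T ⊆ support x := fun l hl => ne_zero_of_sortKey_le hk hl
  have himg : decRank x '' T = Iio (decRank x k + 1) := by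
    refine eq_of_subset_of_ncard_le ?_ ?_ (finite_Iio _)
    · rintro _ ⟨l, hl, rfl⟩
      rcases (show sortKey x l ≤ sortKey x k from hl).lt_or_eq with hl | hl
      · exact (decRank_lt_decRank hfin hk hl).trans (Nat.lt_succ_self _)
      · rw [sortKey_injective hl]
        exact Nat.lt_succ_self _
    · rw [(injOn_decRank hfin |>.mono hT).ncard_image, ncard_setOf_sortKey_le hfin hk,
        ← Finset.coe_Iio, ncard_coe_finset, Nat.card_Iio]
  obtain ⟨l, hl, rfl⟩ : j ∈ decRank x '' T := himg ▸ hj.trans (Nat.lt_succ_self _)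
  exact ⟨l, hT hl, rfl⟩

theorem dstar_le_of_card_le {J : Finset ℕ} {n : ℕ} {c : ℝ} (hJ : J.card ≤ n)
    (hc : ∀ k ∉ J, |x k| ≤ c) : dstar x n ≤ c := by
  unfold dstar
  refine le_trans (csInf_le ⟨0, ?_⟩ ⟨J, hJ, rfl⟩) ?_
  · rintro _ ⟨J', -, rfl⟩
    exact Real.sSup_nonneg (by rintro _ ⟨k, -, rfl⟩; exact abs_nonneg _)
  · obtain ⟨k, hk⟩ := Infinite.exists_notMem_finset J
    exact csSup_le ⟨_, k, hk, rfl⟩ (by rintro _ ⟨k, hk, rfl⟩; exact hc k hk)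

theorem le_dstar (hbdd : BddAbove (range fun k => |x k|)) {n : ℕ} {c : ℝ}
    (h : ∀ J : Finset ℕ, J.card ≤ n → ∃ k ∉ J, c ≤ |x k|) : c ≤ dstar x n := by
  refine le_csInf ⟨_, ∅, by simp, rfl⟩ ?_
  rintro _ ⟨J, hJ, rfl⟩
  obtain ⟨k, hk, hck⟩ := h J hJ
  exact hck.trans (le_csSup (hbdd.mono (by rintro _ ⟨k, -, rfl⟩; exact mem_range_self k))
    ⟨k, hk, rfl⟩)

theorem dstar_nonneg (x : ℕ → ℝ) (n : ℕ) : 0 ≤ dstar x n :=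
  Real.sInf_nonneg (by
    rintro _ ⟨J, -, rfl⟩
    exact Real.sSup_nonneg (by rintro _ ⟨k, -, rfl⟩; exact abs_nonneg _))

theorem dstar_le {c : ℝ} (hc : ∀ k, |x k| ≤ c) (n : ℕ) : dstar x n ≤ c :=
  dstar_le_of_card_le (J := ∅) (by simp) fun k _ => hc k

theorem dstar_decRank (hbdd : BddAbove (range fun k => |x k|))
    (hfin : ∀ t > 0, {k | t < |x k|}.Finite) {k : ℕ} (hk : x k ≠ 0) :
    dstar x (decRank x k) = |x k| := by
  refine le_antisymm ?_ (le_dstar hbdd fun J hJ => ?_)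
  · have hP := finite_setOf_sortKey_lt hfin hk
    refine dstar_le_of_card_le (J := hP.toFinset) (by rw [decRank, ncard_eq_toFinset_card _ hP])
      fun l hl => abs_le_of_sortKey_le ?_
    simpa using hl
  · obtain ⟨l, hl, hlJ⟩ := exists_mem_notMem_of_ncard_lt_ncard (s := (J : Set ℕ))
      (t := {l | sortKey x l ≤ sortKey x k})
      (by rw [ncard_coe_finset, ncard_setOf_sortKey_le hfin hk]; omega)
    exact ⟨l, hlJ, abs_le_of_sortKey_le hl⟩

theorem dstar_eq_zero_of_ncard_support_le (hs : (support x).Finite) {n : ℕ}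
    (hn : (support x).ncard ≤ n) : dstar x n = 0 := by
  refine le_antisymm (dstar_le_of_card_le (J := hs.toFinset) ?_ fun k hk => ?_) (dstar_nonneg x n)
  · rwa [← ncard_eq_toFinset_card _ hs]
  · simp_all

theorem bijOn_decRank (hbdd : BddAbove (range fun k => |x k|))
    (hfin : ∀ t > 0, {k | t < |x k|}.Finite) :
    BijOn (decRank x) (support x) (support (dstar x)) := by
  refine ⟨fun k hk => ?_, injOn_decRank hfin, fun n hn => ?_⟩
  · rw [mem_support, dstar_decRank hbdd hfin hk]
    exact abs_ne_zero.mpr hk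
  · by_contra hnr
    have hlt : decRank x '' support x ⊆ Iio n := by
      rintro _ ⟨k, hk, rfl⟩
      by_contra hge
      obtain ⟨l, hl, hln⟩ : ∃ l ∈ support x, decRank x l = n :=
        (eq_or_lt_of_le (not_lt.mp hge)).elim (fun h => ⟨k, hk, h.symm⟩)
          (exists_decRank_eq hfin hk)
      exact hnr ⟨l, hl, hln⟩
    have hs := ((finite_Iio n).subset hlt).of_finite_image (injOn_decRank hfin)
    refine hn (dstar_eq_zero_of_ncard_support_le hs ?_)
    rw [← (injOn_decRank hfin).ncard_image]
    simpa [← Finset.coe_Iio] using ncard_le_ncard hlt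

theorem dstar_comp_perm (x : ℕ → ℝ) (σ : Equiv.Perm ℕ) : dstar (x ∘ σ) = dstar x := by
  have hsup (J : Finset ℕ) : {b | ∃ k, k ∉ J ∧ b = |(x ∘ σ) k|} =
      {b | ∃ k, k ∉ J.map σ.toEmbedding ∧ b = |x k|} := by
    ext b
    rw [mem_ofPred_eq, mem_ofPred_eq, σ.exists_congr_left]
    simp [Finset.mem_map_equiv]
  funext n
  simp only [dstar, hsup]
  congr 1
  ext a
  constructor
  · rintro ⟨J, hJ, rfl⟩
    exact ⟨J.map σ.toEmbedding, by simpa using hJ, rfl⟩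
  · rintro ⟨J, hJ, rfl⟩
    exact ⟨J.map σ.symm.toEmbedding, by simpa using hJ, by simp [Finset.map_map]⟩

end Rearrangement

namespace BanachSeqSpace

variable {S : BanachSeqSpace} {x y : ℕ → ℝ}

theorem abs_apply_le_N (hx : x ∈ S.X) (k : ℕ) : |x k| ≤ S.N x := by
  have hek : (fun n => if n = k then x k else 0) = x k • fun n => if n = k then (1 : ℝ) else 0 := by
    funext n; by_cases h : n = k <;> simp [h]
  have := S.mono_norm (fun n => if n = k then x k else 0) x hx fun n => by
    by_cases h : n = k <;> simp [h]
  rwa [hek, S.N_smul _ _ (S.unit_mem k), S.unit_norm, mul_one] at this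

theorem abs_mem (hx : x ∈ S.X) : |x| ∈ S.X :=
  S.mono_mem _ x hx fun n => (abs_abs (x n)).le

theorem indicator_mem (hx : x ∈ S.X) (A : Set ℕ) : A.indicator x ∈ S.X :=
  S.mono_mem _ x hx fun n => by by_cases h : n ∈ A <;> simp [h]

theorem mem_of_abs_le (h1 : (1 : ℕ → ℝ) ∈ S.X) {c : ℝ} (hc : ∀ n, |x n| ≤ c) : x ∈ S.X :=
  S.mono_mem _ (c • 1) (S.X.smul_mem c h1) fun n => by
    simpa [abs_of_nonneg ((abs_nonneg _).trans (hc 0))] using hc n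

theorem N_le_of_abs_le (h1 : (1 : ℕ → ℝ) ∈ S.X) {c : ℝ} (hc : ∀ n, |x n| ≤ c) :
    S.N x ≤ c * S.N 1 := by
  have hc0 : 0 ≤ c := (abs_nonneg _).trans (hc 0)
  have := S.mono_norm _ (c • 1) (S.X.smul_mem c h1) fun n => by simpa [abs_of_nonneg hc0] using hc n
  rwa [S.N_smul _ _ h1, abs_of_nonneg hc0] at this

theorem N_one_pos (h1 : (1 : ℕ → ℝ) ∈ S.X) : 0 < S.N 1 :=
  (S.N_nonneg _ h1).lt_of_ne fun h => one_ne_zero (S.N_eq_zero _ h1 h.symm)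

section SymmetricFunctional

variable (hsym : IsSymmetric S) {γ : (ℕ → ℝ) → ℝ}
  (hγ : ∀ x ∈ S.X, ∀ σ : Equiv.Perm ℕ, γ (x ∘ σ) = γ x)
  (hadd : ∀ x ∈ S.X, ∀ y ∈ S.X, γ (x + y) = γ x + γ y)
include hsym

theorem mem_of_bijOn {φ : ℕ → ℕ} (hx : x ∈ S.X) (hφ : BijOn φ (support x) (support y))
    (hxy : EqOn (y ∘ φ) x (support x)) : y ∈ S.X := by
  obtain ⟨A, σ, τ, rfl⟩ := exists_eq_indicator_comp_perm_add_compl hφ hxy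
  exact S.X.add_mem (hsym _ (indicator_mem hx A) σ).1 (hsym _ (indicator_mem hx Aᶜ) τ).1

include hγ hadd in
theorem apply_eq_of_bijOn {φ : ℕ → ℕ} (hx : x ∈ S.X) (hφ : BijOn φ (support x) (support y))
    (hxy : EqOn (y ∘ φ) x (support x)) : γ y = γ x := by
  obtain ⟨A, σ, τ, rfl⟩ := exists_eq_indicator_comp_perm_add_compl hφ hxy
  have hA := indicator_mem hx A
  have hAc := indicator_mem hx Aᶜ
  rw [hadd _ (hsym _ hA σ).1 _ (hsym _ hAc τ).1, hγ _ hA, hγ _ hAc, ← hadd _ hA _ hAc,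
    indicator_self_add_compl]

include hγ hadd in
theorem comp_div_two_mem_and_apply {w : ℕ → ℝ} (hw : w ∈ S.X) :
    w ∘ (· / 2) ∈ S.X ∧ γ (w ∘ (· / 2)) = 2 * γ w := by
  have hpiece : ∀ f : ℕ → ℕ, LeftInverse (· / 2) f →
      (range f).indicator (w ∘ (· / 2)) ∈ S.X ∧ γ ((range f).indicator (w ∘ (· / 2))) = γ w :=
    fun f hf => ⟨mem_of_bijOn hsym hw (bijOn_support_indicator_range hf w)
        fun k _ => congrFun (indicator_range_comp_leftInverse hf w) k,
      apply_eq_of_bijOn hsym hγ hadd hw (bijOn_support_indicator_range hf w)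
        fun k _ => congrFun (indicator_range_comp_leftInverse hf w) k⟩
  obtain ⟨hE, hγE⟩ := hpiece (2 * ·) fun k => by simp
  obtain ⟨hO, hγO⟩ := hpiece (2 * · + 1) fun k => by simp only; omega
  have hodd : (range (2 * ·))ᶜ = range (2 * · + 1) := by
    ext n
    simp only [mem_compl_iff, mem_range]
    constructor
    · exact fun h => ⟨n / 2, by by_contra h'; exact h ⟨n / 2, by omega⟩⟩
    · rintro ⟨k, rfl⟩ ⟨j, hj⟩
      omega
  have hsplit := indicator_self_add_compl (range (2 * ·)) (w ∘ (· / 2))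
  rw [hodd] at hsplit
  rw [← hsplit, hadd _ hE _ hO, hγE, hγO, two_mul]
  exact ⟨S.X.add_mem hE hO, rfl⟩

include hγ hadd in
theorem comp_div_pow_two_mem_and_apply {w : ℕ → ℝ} (hw : w ∈ S.X) (j : ℕ) :
    w ∘ (· / 2 ^ j) ∈ S.X ∧ γ (w ∘ (· / 2 ^ j)) = 2 ^ j * γ w := by
  induction j with
  | zero => simpa [comp_def] using hw
  | succ j ih =>
    have hcomp : w ∘ (· / 2 ^ (j + 1)) = (w ∘ (· / 2 ^ j)) ∘ (· / 2) := by
      funext n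
      simp only [comp_apply, Nat.div_div_eq_div_mul, pow_succ, mul_comm]
    obtain ⟨hmem, happ⟩ := comp_div_two_mem_and_apply hsym hγ hadd ih.1
    rw [hcomp, happ, ih.2, pow_succ]
    exact ⟨hmem, by ring⟩

include hγ hadd in
theorem apply_eq_zero_of_one_mem (hcont : ∃ C : ℝ, ∀ x ∈ S.X, |γ x| ≤ C * S.N x)
    (h1 : (1 : ℕ → ℝ) ∈ S.X) {z : ℕ → ℝ} (hz : z ∈ S.X) : γ z = 0 := by
  obtain ⟨C, hC⟩ := hcont
  have hC0 : 0 ≤ C :=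
    (mul_nonneg_iff_of_pos_right (N_one_pos h1)).mp ((abs_nonneg _).trans (hC 1 h1))
  have hbound : ∀ j : ℕ, 2 ^ j * |γ z| ≤ C * (S.N z * S.N 1) := fun j => by
    obtain ⟨hmem, happ⟩ := comp_div_pow_two_mem_and_apply hsym hγ hadd hz j
    calc 2 ^ j * |γ z| = |γ (z ∘ (· / 2 ^ j))| := by
          rw [happ, abs_mul, abs_of_pos (by positivity : (0 : ℝ) < 2 ^ j)]
      _ ≤ C * S.N (z ∘ (· / 2 ^ j)) := hC _ hmem
      _ ≤ C * (S.N z * S.N 1) :=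
        mul_le_mul_of_nonneg_left (N_le_of_abs_le h1 fun n => abs_apply_le_N hz _) hC0
  by_contra hne
  have hpos : 0 < |γ z| := abs_pos.mpr hne
  obtain ⟨j, hj⟩ := pow_unbounded_of_one_lt (C * (S.N z * S.N 1) / |γ z|) one_lt_two
  rw [div_lt_iff₀ hpos] at hj
  linarith [hbound j]

theorem one_mem_of_infinite_setOf_lt_abs (hx : x ∈ S.X) {t : ℝ} (ht : 0 < t)
    (hinf : {k | t < |x k|}.Infinite) : (1 : ℕ → ℝ) ∈ S.X := by
  set A := {k | t < |x k|}
  have hA : A.indicator 1 ∈ S.X := S.mono_mem _ (t⁻¹ • x) (S.X.smul_mem _ hx) fun k => by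
    by_cases hk : k ∈ A
    · simp only [indicator_of_mem hk, Pi.one_apply, abs_one, Pi.smul_apply, smul_eq_mul,
        abs_mul, abs_inv, abs_of_pos ht]
      rw [le_inv_mul_iff₀ ht, mul_one]
      exact hk.le
    · simp only [indicator_of_notMem hk, abs_zero]
      positivity
  refine mem_of_bijOn hsym hA (φ := Nat.count (· ∈ A)) ?_ fun k _ => ?_
  · rw [support_indicator, support_one, inter_univ]
    exact ⟨mapsTo_univ _ _, fun m hm n hn => Nat.count_injective hm hn,
      fun n _ => ⟨_, Nat.nth_mem_of_infinite hinf n, Nat.count_nth_of_infinite hinf n⟩⟩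
  · simp [indicator_of_mem (support_indicator_subset ‹_›)]

include hγ hadd in
theorem apply_dstar_eq_apply_abs (hcont : ∃ C : ℝ, ∀ x ∈ S.X, |γ x| ≤ C * S.N x)
    (hx : x ∈ S.X) : γ (dstar x) = γ |x| := by
  by_cases hfin : ∀ t > 0, {k | t < |x k|}.Finite
  · have hbdd : BddAbove (range fun k => |x k|) :=
      ⟨S.N x, forall_mem_range.mpr (abs_apply_le_N hx)⟩
    have hsupp : support |x| = support x := by
      ext k
      simp
    refine apply_eq_of_bijOn hsym hγ hadd (abs_mem hx) (φ := decRank x) ?_ fun k hk => ?_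
    · exact hsupp ▸ bijOn_decRank hbdd hfin
    · exact dstar_decRank hbdd hfin (show k ∈ support x from hsupp ▸ hk)
  · push Not at hfin
    obtain ⟨t, ht, hinf⟩ := hfin
    have h1 := one_mem_of_infinite_setOf_lt_abs hsym hx ht hinf
    have hd : dstar x ∈ S.X := mem_of_abs_le h1 fun n =>
      (abs_of_nonneg (dstar_nonneg x n)).trans_le (dstar_le (abs_apply_le_N hx) n)
    rw [apply_eq_zero_of_one_mem hsym hγ hadd hcont h1 hd,
      apply_eq_zero_of_one_mem hsym hγ hadd hcont h1 (abs_mem hx)]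

include hadd in
theorem apply_comp_perm_of_apply_eq_apply_dstar
    (h : ∀ x ∈ S.X, (∀ n, 0 ≤ x n) → γ x = γ (dstar x)) (hx : x ∈ S.X) (σ : Equiv.Perm ℕ) :
    γ (x ∘ σ) = γ x := by
  have hcone : ∀ y ∈ S.X, 0 ≤ y → γ (y ∘ σ) = γ y := fun y hy hy0 => by
    rw [h _ (hsym y hy σ).1 fun n => hy0 (σ n), dstar_comp_perm, ← h y hy hy0]
  have hpos : x⁺ ∈ S.X := S.mono_mem _ x hx fun n =>
    (abs_of_nonneg (posPart_nonneg (x n))).trans_le (sup_le (le_abs_self _) (abs_nonneg _))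
  have hneg : x⁻ ∈ S.X := S.mono_mem _ x hx fun n =>
    (abs_of_nonneg (negPart_nonneg (x n))).trans_le (sup_le (neg_le_abs _) (abs_nonneg _))
  have hsplit : x⁺ = x + x⁻ := sub_eq_iff_eq_add.mp (posPart_sub_negPart x)
  have h₁ : γ x⁺ = γ x + γ x⁻ := by rw [hsplit, hadd _ hx _ hneg]
  have h₂ : γ (x⁺ ∘ σ) = γ (x ∘ σ) + γ (x⁻ ∘ σ) := by
    rw [hsplit, Pi.add_comp, hadd _ (hsym x hx σ).1 _ (hsym _ hneg σ).1]
  linarith [hcone _ hpos (posPart_nonneg x), hcone _ hneg (negPart_nonneg x)]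

end SymmetricFunctional

end BanachSeqSpace

theorem symmetric_iff_rearrangement_on_positive_cone_general (S : BanachSeqSpace)
    (hsym : IsSymmetric S)
    (γ : (ℕ → ℝ) → ℝ)
    (hadd : ∀ x ∈ S.X, ∀ y ∈ S.X, γ (x + y) = γ x + γ y)
    (hcont : ∃ C : ℝ, ∀ x ∈ S.X, |γ x| ≤ C * S.N x) :
    (∀ x ∈ S.X, ∀ σ : Equiv.Perm ℕ, γ (x ∘ σ) = γ x) ↔
      (∀ x ∈ S.X, (∀ n, 0 ≤ x n) → γ x = γ (dstar x)) :=
  ⟨fun hγ x hx hpos => by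
    rw [BanachSeqSpace.apply_dstar_eq_apply_abs hsym hγ hadd hcont hx,
      abs_of_nonneg (show 0 ≤ x from hpos)],
  fun h x hx σ => BanachSeqSpace.apply_comp_perm_of_apply_eq_apply_dstar hsym hadd h hx σ⟩

/-- A continuous linear functional on a real symmetric Banach sequence space is
symmetric iff `γ x = γ x*` for every `x` in the positive cone. -/
theorem symmetric_iff_rearrangement_on_positive_cone (S : BanachSeqSpace)
    (hsym : IsSymmetric S)
    (γ : (ℕ → ℝ) → ℝ)
    (hadd : ∀ x ∈ S.X, ∀ y ∈ S.X, γ (x + y) = γ x + γ y)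
    (hsmul : ∀ (c : ℝ), ∀ x ∈ S.X, γ (c • x) = c * γ x)
    (hcont : ∃ C : ℝ, ∀ x ∈ S.X, |γ x| ≤ C * S.N x) :
    (∀ x ∈ S.X, ∀ σ : Equiv.Perm ℕ, γ (x ∘ σ) = γ x) ↔
      (∀ x ∈ S.X, (∀ n, 0 ≤ x n) → γ x = γ (dstar x)) :=
  symmetric_iff_rearrangement_on_positive_cone_general S hsym γ hadd hcont
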